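/- Properties of the vertex sequence: For every sufficiently large integer i ≥ 1, the limit v_i = lim_{s→0} q_i(s) exists (the two one-sided limits as s → 0⁺ and s → 0⁻ agree); moreover v_i < 0 for every such i, lim_{i→∞} v_i = 0, and there exists a constant p > 0 such that lim_{i→∞} i·v_i = −p. -/

import Mathlib

/-! With `A = (s²/R²)·T_i(s)` and `u = R/s²`, the subtraction formula gives
`tan (A - arctan u) = (sin A - u cos A) / (cos A + u sin A)`, and multiplying by `s²` turns
`q_i(s)` into `(s² sin A - R cos A) / (cos A + (T_i(s)/R) sinc A)`, which is continuous at `s = 0`.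
Hence `v_i = -R² / (R + T_i(0))`, where `R + T_i(0)` is affine in `i` with slope `2π/a`; so `v_i < 0`
for large `i`, `v_i → 0` and `i v_i → -aR²/(2π)`. -/

open Set Filter Topology

/-- `T_i(s) = (2πi + β − α + s)/a + R − 1`. -/
noncomputable def Tfun (a R α β : ℝ) (i : ℕ) (s : ℝ) : ℝ :=
  (2 * Real.pi * i + β - α + s) / a + R - 1

/-- `q_i(s) = s² · tan((s²/R²)·T_i(s) − arctan(R/s²))`. -/
noncomputable def qfun (a R α β : ℝ) (i : ℕ) (s : ℝ) : ℝ :=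
  s ^ 2 * Real.tan ((s ^ 2 / R ^ 2) * Tfun a R α β i s - Real.arctan (R / s ^ 2))

namespace Real

theorem mul_sinc (x : ℝ) : x * sinc x = sin x := by
  rcases eq_or_ne x 0 with rfl | hx
  · simp
  · rw [sinc_of_ne_zero hx, mul_div_cancel₀ _ hx]

theorem tan_sub_arctan (A u : ℝ) :
    tan (A - arctan u) = (sin A - u * cos A) / (cos A + u * sin A) := by
  have ht : √(1 + u ^ 2) ≠ 0 := by positivity
  rw [tan_eq_sin_div_cos, sin_sub, cos_sub, sin_arctan, cos_arctan]
  field_simp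

theorem mul_tan_sub_arctan_div {x : ℝ} (hx : x ≠ 0) (R T : ℝ) :
    x * tan (x / R ^ 2 * T - arctan (R / x)) =
      (x * sin (x / R ^ 2 * T) - R * cos (x / R ^ 2 * T)) /
        (cos (x / R ^ 2 * T) + T / R * sinc (x / R ^ 2 * T)) := by
  rw [tan_sub_arctan, ← mul_div_assoc, ← mul_sinc (x / R ^ 2 * T)]
  congr 1
  · field_simp
  · rcases eq_or_ne R 0 with rfl | hR
    · simp
    · field_simp

end Real

open Real

theorem tendsto_mul_tan_sub_arctan {ι : Type*} {l : Filter ι} {x T : ι → ℝ} {R τ : ℝ}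
    (hx : Tendsto x l (𝓝 0)) (hx0 : ∀ᶠ s in l, x s ≠ 0) (hT : Tendsto T l (𝓝 τ))
    (hR : R ≠ 0) (hRτ : R + τ ≠ 0) :
    Tendsto (fun s => x s * tan (x s / R ^ 2 * T s - arctan (R / x s))) l
      (𝓝 (-R ^ 2 / (R + τ))) := by
  have hA : Tendsto (fun s => x s / R ^ 2 * T s) l (𝓝 0) := by
    simpa using (hx.div_const (R ^ 2)).mul hT
  have hsin := (continuous_sin.tendsto 0).comp hA
  have hcos := (continuous_cos.tendsto 0).comp hA
  have hsinc := (continuous_sinc.tendsto 0).comp hA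
  simp only [Function.comp_def, sin_zero, cos_zero, sinc_zero] at hsin hcos hsinc
  have hden : 1 + τ / R * 1 ≠ 0 := by
    rw [mul_one, one_add_div hR]
    exact div_ne_zero hRτ hR
  have hval : (0 * 0 - R * 1) / (1 + τ / R * 1) = -R ^ 2 / (R + τ) := by
    field_simp
    ring
  have hlim := ((hx.mul hsin).sub (hcos.const_mul R)).div
    (hcos.add ((hT.div_const R).mul hsinc)) hden
  rw [hval] at hlim
  refine hlim.congr' ?_
  filter_upwards [hx0] with s hs using (mul_tan_sub_arctan_div hs R (T s)).symm

theorem tendsto_natCast_mul_div_mul_add (κ C δ : ℝ) :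
    Tendsto (fun n : ℕ => n * (C / (κ * (n + δ)))) atTop (𝓝 (C / κ)) := by
  have h := (tendsto_natCast_div_add_atTop δ).const_mul (C / κ)
  rw [mul_one] at h
  refine h.congr fun n => ?_
  simp only [div_eq_mul_inv, mul_inv]
  ring

theorem continuous_Tfun (a R α β : ℝ) (i : ℕ) : Continuous (Tfun a R α β i) := by
  unfold Tfun
  fun_prop

theorem tendsto_qfun {a R α β : ℝ} {i : ℕ} (hR : R ≠ 0) (hi : R + Tfun a R α β i 0 ≠ 0) :
    Tendsto (qfun a R α β i) (𝓝[≠] 0) (𝓝 (-R ^ 2 / (R + Tfun a R α β i 0))) := by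
  have hsq : Tendsto (fun s : ℝ => s ^ 2) (𝓝[≠] 0) (𝓝 0) :=
    ((continuous_pow 2).tendsto' 0 0 (zero_pow two_ne_zero)).mono_left nhdsWithin_le_nhds
  have hsq0 : ∀ᶠ s : ℝ in 𝓝[≠] 0, s ^ 2 ≠ 0 := by
    filter_upwards [self_mem_nhdsWithin] with s hs using pow_ne_zero 2 hs
  exact tendsto_mul_tan_sub_arctan hsq hsq0
    (((continuous_Tfun a R α β i).tendsto 0).mono_left nhdsWithin_le_nhds) hR hi

theorem add_Tfun_zero {a : ℝ} (ha : a ≠ 0) (R α β : ℝ) (i : ℕ) :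
    R + Tfun a R α β i 0 = 2 * π / a * (i + (β - α + a * (2 * R - 1)) / (2 * π)) := by
  unfold Tfun
  field_simp
  ring

theorem vertex_sequence_properties_general (a R α β : ℝ)
    (ha : 0 < a) (hR0 : 0 < R) :
    ∃ N : ℕ, ∃ v : ℕ → ℝ,
      (∀ i : ℕ, N ≤ i →
        Tendsto (fun s => qfun a R α β i s) (𝓝[≠] (0 : ℝ)) (𝓝 (v i)) ∧ v i < 0) ∧
      Tendsto v atTop (𝓝 0) ∧
      ∃ p : ℝ, 0 < p ∧ Tendsto (fun i : ℕ => (i : ℝ) * v i) atTop (𝓝 (-p)) := by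
  set δ := (β - α + a * (2 * R - 1)) / (2 * π)
  have hκ : 0 < 2 * π / a := by positivity
  have hD : Tendsto (fun i : ℕ => R + Tfun a R α β i 0) atTop atTop := by
    simp_rw [add_Tfun_zero ha.ne']
    exact (tendsto_atTop_add_const_right _ δ tendsto_natCast_atTop_atTop).const_mul_atTop hκ
  obtain ⟨N, hN⟩ := eventually_atTop.1 (hD.eventually_gt_atTop 0)
  refine ⟨N, fun i => -R ^ 2 / (R + Tfun a R α β i 0),
    fun i hi => ⟨tendsto_qfun hR0.ne' (hN i hi).ne',
      div_neg_of_neg_of_pos (neg_neg_of_pos (pow_pos hR0 2)) (hN i hi)⟩,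
    tendsto_const_nhds.div_atTop hD, a * R ^ 2 / (2 * π), by positivity, ?_⟩
  have hval : -R ^ 2 / (2 * π / a) = -(a * R ^ 2 / (2 * π)) := by
    field_simp
  simp_rw [add_Tfun_zero ha.ne', ← hval]
  exact tendsto_natCast_mul_div_mul_add (2 * π / a) (-R ^ 2) δ

/-- **Properties of the vertex sequence** `v_i = lim_{s→0} q_i(s)`. -/
theorem vertex_sequence_properties (a R α β : ℝ)
    (ha : 0 < a) (hR0 : 0 < R) (hR1 : R < 1)
    (hα : α ∈ Set.Ico 0 (2 * Real.pi)) (hβ : β ∈ Set.Ico 0 (2 * Real.pi)) :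
    ∃ N : ℕ, ∃ v : ℕ → ℝ,
      (∀ i : ℕ, N ≤ i →
        Tendsto (fun s => qfun a R α β i s) (𝓝[≠] (0 : ℝ)) (𝓝 (v i)) ∧ v i < 0) ∧
      Tendsto v atTop (𝓝 0) ∧
      ∃ p : ℝ, 0 < p ∧ Tendsto (fun i : ℕ => (i : ℝ) * v i) atTop (𝓝 (-p)) :=
  vertex_sequence_properties_general a R α β ha hR0
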